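/- Let $J, R, Q \in \mathbb{R}^{n \times n}$ with $J^\top = -J$, $Q$ symmetric positive definite, $F, P \in \mathbb{R}^{n \times m}$, $D \in \mathbb{R}^{m \times m}$, with $K_s = \begin{pmatrix} 2R & -(F-P) & -(F+P) \\ -(F-P)^\top & I_m & -D^\top \\ -(F+P)^\top & -D & I_m \end{pmatrix} \succeq 0$. Then with $A = (J-R)Q$, $B = F-P$, $C = (F+P)^\top Q$, the matrix $X = Q$ satisfies $\begin{pmatrix} A^\top X + XA & XB & C^\top \\ B^\top X & -I_m & D^\top \\ C & D & -I_m \end{pmatrix} \preceq 0$. -/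

import Mathlib

open Matrix

/-- 3x3 block matrix with block sizes n, m, m. -/
def blk3 (n m : ℕ) (M11 : Matrix (Fin n) (Fin n) ℝ) (M12 M13 : Matrix (Fin n) (Fin m) ℝ)
    (M21 M31 : Matrix (Fin m) (Fin n) ℝ) (M22 M23 M32 M33 : Matrix (Fin m) (Fin m) ℝ) :
    Matrix (Fin n ⊕ (Fin m ⊕ Fin m)) (Fin n ⊕ (Fin m ⊕ Fin m)) ℝ :=
  Matrix.fromBlocks M11 (Matrix.fromCols M12 M13) (Matrix.fromRows M21 M31)
    (Matrix.fromBlocks M22 M23 M32 M33)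

/-- The scattering pH matrix K_s. -/
def Ksmat (n m : ℕ) (R : Matrix (Fin n) (Fin n) ℝ) (F P : Matrix (Fin n) (Fin m) ℝ)
    (D : Matrix (Fin m) (Fin m) ℝ) :
    Matrix (Fin n ⊕ (Fin m ⊕ Fin m)) (Fin n ⊕ (Fin m ⊕ Fin m)) ℝ :=
  blk3 n m ((2 : ℝ) • R) (-(F - P)) (-(F + P)) (-(F - P)ᵀ) (-(F + P)ᵀ) 1 (-Dᵀ) (-D) 1

/-- The bounded-real LMI matrix. -/
def BRmat (n m : ℕ) (A : Matrix (Fin n) (Fin n) ℝ) (B : Matrix (Fin n) (Fin m) ℝ)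
    (C : Matrix (Fin m) (Fin n) ℝ) (D : Matrix (Fin m) (Fin m) ℝ)
    (X : Matrix (Fin n) (Fin n) ℝ) :
    Matrix (Fin n ⊕ (Fin m ⊕ Fin m)) (Fin n ⊕ (Fin m ⊕ Fin m)) ℝ :=
  blk3 n m (Aᵀ * X + X * A) (X * B) Cᵀ (Bᵀ * X) C (-1) Dᵀ D (-1)

/-
With `S = diag(Q, I, I)`, skew-symmetry of `J` and symmetry of `Q` and `R` collapse the `(1,1)` block
`((J - R) Q)ᵀ Q + Q (J - R) Q` of the bounded-real matrix to `-2 Q R Q`, so that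
`-BR = Sᵀ K_s S`; a congruence of a positive semidefinite matrix is positive semidefinite.
-/

section

variable {n m : ℕ}

lemma neg_blk3 (M11 : Matrix (Fin n) (Fin n) ℝ) (M12 M13 : Matrix (Fin n) (Fin m) ℝ)
    (M21 M31 : Matrix (Fin m) (Fin n) ℝ) (M22 M23 M32 M33 : Matrix (Fin m) (Fin m) ℝ) :
    -blk3 n m M11 M12 M13 M21 M31 M22 M23 M32 M33 =
      blk3 n m (-M11) (-M12) (-M13) (-M21) (-M31) (-M22) (-M23) (-M32) (-M33) := by
  simp only [blk3, fromBlocks_neg, fromCols_neg, fromRows_neg]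

lemma transpose_mul_blk3_mul (X M11 : Matrix (Fin n) (Fin n) ℝ) (M12 M13 : Matrix (Fin n) (Fin m) ℝ)
    (M21 M31 : Matrix (Fin m) (Fin n) ℝ) (M22 M23 M32 M33 : Matrix (Fin m) (Fin m) ℝ) :
    (fromBlocks X 0 0 1)ᵀ * blk3 n m M11 M12 M13 M21 M31 M22 M23 M32 M33 * fromBlocks X 0 0 1 =
      blk3 n m (Xᵀ * M11 * X) (Xᵀ * M12) (Xᵀ * M13) (M21 * X) (M31 * X) M22 M23 M32 M33 := by
  simp [blk3, fromBlocks_transpose, fromBlocks_multiply, mul_fromCols, fromRows_mul]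

lemma Matrix.IsHermitian.isSymm_of_Ksmat {R : Matrix (Fin n) (Fin n) ℝ}
    {F P : Matrix (Fin n) (Fin m) ℝ} {D : Matrix (Fin m) (Fin m) ℝ}
    (h : (Ksmat n m R F P D).IsHermitian) : R.IsSymm := by
  have h2R : ((2 : ℝ) • R).IsSymm := isHermitian_iff_isSymm.mp (isHermitian_fromBlocks_iff.mp h).1
  rw [IsSymm, transpose_smul] at h2R
  exact smul_right_injective _ (two_ne_zero (α := ℝ)) h2R

lemma neg_BRmat_eq_transpose_mul_Ksmat_mul {J R Q : Matrix (Fin n) (Fin n) ℝ}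
    (F P : Matrix (Fin n) (Fin m) ℝ) (D : Matrix (Fin m) (Fin m) ℝ)
    (hJ : Jᵀ = -J) (hR : R.IsSymm) (hQ : Q.IsSymm) :
    -BRmat n m ((J - R) * Q) (F - P) ((F + P)ᵀ * Q) D Q =
      (fromBlocks Q 0 0 1)ᵀ * Ksmat n m R F P D * fromBlocks Q 0 0 1 := by
  have hA : ((J - R) * Q)ᵀ * Q + Q * ((J - R) * Q) = -(Qᵀ * ((2 : ℝ) • R) * Q) := by
    rw [transpose_mul, transpose_sub, hJ, hR.eq, hQ.eq, two_smul]
    noncomm_ring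
  rw [BRmat, neg_blk3, Ksmat, transpose_mul_blk3_mul, hA]
  simp only [neg_neg, hQ.eq, transpose_mul, transpose_transpose, Matrix.mul_neg,
    Matrix.neg_mul]

end

theorem stmt14 (n m : ℕ)
    (J R Q : Matrix (Fin n) (Fin n) ℝ) (F P : Matrix (Fin n) (Fin m) ℝ)
    (D : Matrix (Fin m) (Fin m) ℝ)
    (hJ : Jᵀ = -J) (hQ : Q.PosDef)
    (hK : (Ksmat n m R F P D).PosSemidef) :
    (-(BRmat n m ((J - R) * Q) (F - P) ((F + P)ᵀ * Q) D Q)).PosSemidef := by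
  rw [neg_BRmat_eq_transpose_mul_Ksmat_mul F P D hJ hK.isHermitian.isSymm_of_Ksmat
    (isHermitian_iff_isSymm.mp hQ.isHermitian)]
  exact hK.conjTranspose_mul_mul_same (fromBlocks Q 0 0 1)
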